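/- The loss-weighted path kernel representation: under the gradient flow setup, defining K^{lp}(x, x_i) = ∫_0^T ℓ'(y_i, f(w(t),x_i)) K_{w(t)}(x, x_i) dt, the final model satisfies f(w(T), x) = f(w(0), x) + ∑_{i=1}^m (-1)·K^{lp}(x, x_i). -/

import Mathlib

/-!
By the chain rule, `d/dt f(w t, xq) = ⟪∇f(w t, xq), w' t⟫ = -⟪∇f(w t, xq), ∇L(w t)⟫`, and
`∇L = ∑ᵢ ℓ'(yᵢ, f(·, xᵢ)) ∇f(·, xᵢ)`, so the derivative is `-∑ᵢ ℓ'(yᵢ, f(w t, xᵢ)) K_{w t}(xq, xᵢ)`.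
Integrating over `[0, T]` (the fundamental theorem of calculus) and exchanging the finite sum
with the integral gives the representation.
-/

open Set InnerProductSpace
open scoped Gradient

section GradientCalculus

variable {F : Type*} [NormedAddCommGroup F] [InnerProductSpace ℝ F] [CompleteSpace F]

theorem HasGradientAt.comp_hasDerivAt {g : F → ℝ} {g' : F} {w : ℝ → F} {w' : F} {t : ℝ}
    (hg : HasGradientAt g g' (w t)) (hw : HasDerivAt w w' t) :
    HasDerivAt (fun s => g (w s)) ⟪g', w'⟫_ℝ t := by
  have h := hg.hasFDerivAt.comp_hasDerivAt t hw
  rwa [toDual_apply_apply] at h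

theorem HasDerivAt.comp_hasGradientAt {ℓ : ℝ → ℝ} {ℓ' : ℝ} {g : F → ℝ} {g' : F} {v : F}
    (hℓ : HasDerivAt ℓ ℓ' (g v)) (hg : HasGradientAt g g' v) :
    HasGradientAt (fun u => ℓ (g u)) (ℓ' • g') v := by
  rw [hasGradientAt_iff_hasFDerivAt, map_smul]
  exact hℓ.comp_hasFDerivAt v hg.hasFDerivAt

theorem HasGradientAt.fun_sum {ι : Type*} {s : Finset ι} {g : ι → F → ℝ} {g' : ι → F} {v : F}
    (h : ∀ i ∈ s, HasGradientAt (g i) (g' i) v) :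
    HasGradientAt (fun u => ∑ i ∈ s, g i u) (∑ i ∈ s, g' i) v := by
  rw [hasGradientAt_iff_hasFDerivAt, map_sum]
  exact HasFDerivAt.fun_sum fun i hi => (h i hi).hasFDerivAt

theorem ContDiff.continuous_gradient {g : F → ℝ} (hg : ContDiff ℝ 1 g) : Continuous (∇ g) :=
  (toDual ℝ F).symm.continuous.comp (hg.continuous_fderiv one_ne_zero)

theorem integral_inner_gradient_eq_sub {g : F → ℝ} (hg : ContDiff ℝ 1 g) {w w' : ℝ → F}
    {a b : ℝ} (hw : ∀ t ∈ uIcc a b, HasDerivAt w (w' t) t) (hw' : ContinuousOn w' (uIcc a b)) :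
    ∫ t in a..b, ⟪∇ g (w t), w' t⟫_ℝ = g (w b) - g (w a) := by
  have hwc : ContinuousOn w (uIcc a b) := fun t ht => (hw t ht).continuousAt.continuousWithinAt
  have hchain : ∀ t ∈ uIcc a b, HasDerivAt (fun s => g (w s)) ⟪∇ g (w t), w' t⟫_ℝ t :=
    fun t ht => ((hg.differentiable one_ne_zero) (w t)).hasGradientAt.comp_hasDerivAt (hw t ht)
  exact intervalIntegral.integral_eq_sub_of_hasDerivAt hchain
    ((hg.continuous_gradient.comp_continuousOn hwc).inner hw').intervalIntegrable

end GradientCalculus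

theorem loss_weighted_path_kernel_representation (d n m : ℕ)
    (f : EuclideanSpace ℝ (Fin d) → EuclideanSpace ℝ (Fin n) → ℝ)
    (hf : ∀ x, ContDiff ℝ 1 (fun w => f w x))
    (ℓ ℓ' : ℝ → ℝ → ℝ)
    (hℓ : ∀ a b, HasDerivAt (fun y => ℓ a y) (ℓ' a b) b)
    (hℓ' : ∀ a, Continuous (ℓ' a))
    (x : Fin m → EuclideanSpace ℝ (Fin n)) (y : Fin m → ℝ)
    (L : EuclideanSpace ℝ (Fin d) → ℝ)
    (hL : L = fun v => ∑ i, ℓ (y i) (f v (x i)))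
    (T : ℝ) (hT : 0 ≤ T)
    (w : ℝ → EuclideanSpace ℝ (Fin d))
    (hw : ∀ t ∈ Set.Icc (0 : ℝ) T, HasDerivAt w (-(gradient L (w t))) t)
    (xq : EuclideanSpace ℝ (Fin n))
    (Klp : Fin m → ℝ)
    (hKlp : Klp = fun i => ∫ t in (0 : ℝ)..T, ℓ' (y i) (f (w t) (x i)) *
      (inner ℝ (gradient (fun v => f v xq) (w t))
             (gradient (fun v => f v (x i)) (w t)) : ℝ)) :
    f (w T) xq = f (w 0) xq + ∑ i, (-1 : ℝ) * Klp i := by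
  rw [← uIcc_of_le hT] at hw
  have hgradL : ∀ v, ∇ L v = ∑ i, ℓ' (y i) (f v (x i)) • ∇ (fun u => f u (x i)) v := fun v => by
    rw [hL]
    refine (HasGradientAt.fun_sum fun i _ => ?_).gradient
    exact (hℓ (y i) (f v (x i))).comp_hasGradientAt (g := (f · (x i)))
      ((hf (x i)).differentiable one_ne_zero v).hasGradientAt
  have hwc : ContinuousOn w (uIcc 0 T) := fun t ht => (hw t ht).continuousAt.continuousWithinAt
  have hfw : ∀ x', ContinuousOn (fun t => f (w t) x') (uIcc 0 T) := fun x' =>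
    (hf x').continuous.comp_continuousOn hwc
  have hgradfw : ∀ x', ContinuousOn (fun t => ∇ (fun u => f u x') (w t)) (uIcc 0 T) := fun x' =>
    (hf x').continuous_gradient.comp_continuousOn hwc
  have hgradLw : ContinuousOn (fun t => ∇ L (w t)) (uIcc 0 T) := by
    simp only [hgradL]
    exact continuousOn_finsetSum _ fun i _ =>
      ((hℓ' (y i)).comp_continuousOn (hfw (x i))).smul (hgradfw (x i))
  have hflow := integral_inner_gradient_eq_sub (hf xq) hw hgradLw.neg
  have hsplit : ∫ t in (0 : ℝ)..T, ⟪∇ (fun u => f u xq) (w t), -∇ L (w t)⟫_ℝ = ∑ i, -Klp i := by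
    simp only [hKlp, hgradL, inner_neg_right, inner_sum, real_inner_smul_right]
    rw [intervalIntegral.integral_neg, intervalIntegral.integral_finsetSum, ← Finset.sum_neg_distrib]
    exact fun i _ => (((hℓ' (y i)).comp_continuousOn (hfw (x i))).mul
      ((hgradfw xq).inner (hgradfw (x i)))).intervalIntegrable
  simp only [neg_one_mul]
  linarith
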